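/- arXiv:2203.06472 — 5 statements merged into one kernel-verified Lean document; each statement's English description precedes it below -/
import Mathlib

section
/- Let A₀ be a Noetherian regular local ring of dimension ≥ 1 with maximal ideal 𝔪₀, let α ∈ 𝔪₀ \ 𝔪₀², and let n ≥ 1. Then A₁ = A₀[t]/(t^n − α) is a regular local ring, the inclusion A₀ → A₁ is finite flat, and the length of A₁/𝔪₀A₁ as an A₁-module equals n. -/
open Polynomial

/-- A Noetherian local ring is regular if its maximal ideal can be generated by
`k` elements where `k` equals the Krull dimension. -/
def IsRegularLocal (R : Type*) [CommRing R] [IsLocalRing R] : Prop :=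
  IsNoetherianRing R ∧ ∃ (k : ℕ) (s : Fin k → R),
    Ideal.span (Set.range s) = IsLocalRing.maximalIdeal R ∧ ringKrullDim R = k

/-!
`A₁ = A₀[t]/(tⁿ - α)` is free over `A₀` with basis `1, t, …, tⁿ⁻¹`, hence finite, flat and
integral, so `dim A₁ = dim A₀` by going up and incomparability. Every maximal ideal of `A₁`
contracts to `𝔪₀` and contains `t` because `tⁿ = α ∈ 𝔪₀`, so `A₁` is local with maximal ideal
`𝔪₀A₁ + (t)`. Since `α ∉ 𝔪₀²`, some minimal generator of `𝔪₀` can be replaced by `α`, and then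
`α = tⁿ` by `t`: this gives `dim A₁` generators of the maximal ideal. Finally
`A₁/𝔪₀A₁ ≅ k[t]/(tⁿ)`, and the ideals `(tⁱ)` form a composition series of length `n` of it.
-/

section

open IsLocalRing

theorem Ideal.span_range_update {R ι : Type*} [CommSemiring R] [DecidableEq ι] {f : ι → R}
    {i : ι} {x : R} (h : f i ∈ span (Set.range (Function.update f i x))) :
    span (Set.range (Function.update f i x)) = span {x} ⊔ span (Set.range f) := by
  rw [← span_union]
  apply le_antisymm
  · apply span_mono
    rintro _ ⟨j, rfl⟩
    rcases eq_or_ne j i with rfl | hj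
    · simp
    · simp [Function.update_of_ne hj]
  · rw [span_le]
    rintro _ (rfl | ⟨j, rfl⟩)
    · exact subset_span ⟨i, Function.update_self i _ f⟩
    · rcases eq_or_ne j i with rfl | hj
      · exact h
      · exact subset_span ⟨j, Function.update_of_ne hj x f⟩

theorem IsLocalRing.exists_span_range_update_eq_maximalIdeal {R ι : Type*} [CommRing R]
    [IsLocalRing R] [Fintype ι] [DecidableEq ι] {s : ι → R}
    (hs : Ideal.span (Set.range s) = maximalIdeal R) {α : R} (hα : α ∈ maximalIdeal R)
    (hα2 : α ∉ maximalIdeal R ^ 2) :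
    ∃ i, Ideal.span (Set.range (Function.update s i α)) = maximalIdeal R := by
  have hsm (j : ι) : s j ∈ maximalIdeal R := hs ▸ Ideal.subset_span ⟨j, rfl⟩
  obtain ⟨c, hc⟩ := (Submodule.mem_span_range_iff_exists_fun R).mp (hs ▸ hα)
  obtain ⟨i, hi⟩ : ∃ i, IsUnit (c i) := by
    by_contra! h
    refine hα2 (hc ▸ pow_two (maximalIdeal R) ▸ Ideal.sum_mem _ fun j _ => ?_)
    exact Ideal.mul_mem_mul ((mem_maximalIdeal _).mpr (h j)) (hsm j)
  set I := Ideal.span (Set.range (Function.update s i α))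
  have hsi : s i ∈ I := by
    have hci : c i * s i = α - ∑ j ∈ Finset.univ.erase i, c j • s j := by
      rw [eq_sub_iff_add_eq, ← hc, ← Finset.add_sum_erase _ _ (Finset.mem_univ i), smul_eq_mul]
    rw [← I.unit_mul_mem_iff_mem hi, hci]
    refine sub_mem (Ideal.subset_span ⟨i, Function.update_self i α s⟩) (sum_mem fun j hj => ?_)
    exact I.mul_mem_left _
      (Ideal.subset_span ⟨j, Function.update_of_ne (Finset.ne_of_mem_erase hj) α s⟩)
  refine ⟨i, ?_⟩
  rw [Ideal.span_range_update hsi, hs, sup_eq_right, Ideal.span_singleton_le_iff_mem]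
  exact hα

theorem ringKrullDim_eq_of_isIntegral {R S : Type*} [CommRing R] [CommRing S] [Algebra R S]
    [Algebra.IsIntegral R S] [FaithfulSMul R S] : ringKrullDim S = ringKrullDim R := by
  apply le_antisymm
  · exact Order.krullDim_le_of_strictMono (PrimeSpectrum.comap (algebraMap R S))
      fun P Q hPQ => Ideal.IsIntegral.comap_lt_comap (R := R) hPQ
  · refine iSup_le fun l => ?_
    obtain ⟨P, hP⟩ := Algebra.IsIntegral.comap_surjective R S l.head
    have : P.asIdeal.LiesOver l.head.asIdeal := ⟨by rw [← hP]; rfl⟩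
    obtain ⟨L, hL, -⟩ := Ideal.exists_ltSeries_of_hasGoingUp l P.asIdeal
    exact le_iSup_of_le L (by rw [hL])

theorem IsLocalRing.of_isIntegral_of_le_radical {R S : Type*} [CommRing R] [IsLocalRing R]
    [CommRing S] [Algebra R S] [Algebra.IsIntegral R S] {M : Ideal S} (hM : M.IsMaximal)
    (hle : M ≤ (Ideal.map (algebraMap R S) (maximalIdeal R)).radical) : IsLocalRing S := by
  refine .of_unique_max_ideal ⟨M, hM, fun Q hQ => (hM.eq_of_le hQ.ne_top ?_).symm⟩
  have hcomap : Q.comap (algebraMap R S) = maximalIdeal R :=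
    eq_maximalIdeal (Ideal.isMaximal_comap_of_isIntegral_of_isMaximal Q)
  refine hle.trans (hQ.isPrime.radical_le_iff.mpr ?_)
  exact Ideal.map_le_iff_le_comap.mpr hcomap.ge

theorem Submodule.covBy_span_singleton_sup_of_smul_mem {R M : Type*} [CommRing R]
    [IsLocalRing R] [AddCommGroup M] [Module R M] {x : M} {s : Submodule R M} (hx : x ∉ s)
    (hm : ∀ r ∈ maximalIdeal R, r • x ∈ s) : s ⋖ (R ∙ x) ⊔ s := by
  refine ⟨right_lt_sup.mpr (by rwa [span_singleton_le_iff_mem]), fun q hsq hqx => hqx.not_ge ?_⟩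
  obtain ⟨y, hyq, hys⟩ := SetLike.exists_of_lt hsq
  obtain ⟨c, z, hz, rfl⟩ : ∃ c : R, ∃ z ∈ s, c • x + z = y := by
    simpa [mem_sup, mem_span_singleton] using hqx.le hyq
  have hc : IsUnit c := by
    by_contra hc
    exact hys (add_mem (hm c ((mem_maximalIdeal c).mpr hc)) hz)
  have hxq : x ∈ q := by
    rwa [q.add_mem_iff_left (hsq.le hz), q.smul_mem_iff_of_isUnit hc] at hyq
  exact sup_le ((span_singleton_le_iff_mem _ _).mpr hxq) hsq.le

theorem exists_compositionSeries_of_covBy {X : Type*} [Lattice X] [IsModularLattice X]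
    (f : ℕ → X) (n : ℕ) (hf : ∀ i < n, f (i + 1) ⋖ f i) :
    ∃ c : CompositionSeries X, c.head = f n ∧ c.last = f 0 ∧ c.length = n := by
  refine ⟨⟨n, fun i => f (n - i), fun i => ?_⟩, rfl, by simp [RelSeries.last], rfl⟩
  change f (n - i.castSucc) ⋖ f (n - i.succ)
  rw [show n - i.castSucc = n - i.succ + 1 by simp; omega]
  exact hf _ (by have := i.isLt; simp; omega)

theorem exists_compositionSeries_of_maximalIdeal_eq_sup_span {B : Type*} [CommRing B]
    [IsLocalRing B] {J : Ideal B} {t : B} {n : ℕ} (hmax : maximalIdeal B = J ⊔ Ideal.span {t})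
    (htn : t ^ n ∈ J)
    (hnot : ∀ i < n, t ^ i ∉ J ⊔ Ideal.span {t ^ (i + 1)}) :
    ∃ c : CompositionSeries (Submodule B (B ⧸ J)), c.head = ⊥ ∧ c.last = ⊤ ∧ c.length = n := by
  let N (k : ℕ) : Submodule B (B ⧸ J) := Submodule.map J.mkQ (Ideal.span {t ^ k})
  have mem_N (x : B) (k : ℕ) : J.mkQ x ∈ N k ↔ x ∈ J ⊔ Ideal.span {t ^ k} := by
    rw [← Submodule.comap_map_mkQ]; rfl
  have hN0 : N 0 = ⊤ := by simp [N]
  have hNn : N n = ⊥ := by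
    rw [eq_bot_iff, Submodule.map_le_iff_le_comap, Submodule.comap_bot, Submodule.ker_mkQ,
      Ideal.span_singleton_le_iff_mem]
    exact htn
  have hcov (i : ℕ) (hi : i < n) : N (i + 1) ⋖ N i := by
    have hle : N (i + 1) ≤ N i :=
      Submodule.map_mono (Ideal.span_singleton_le_span_singleton.mpr (pow_dvd_pow t i.le_succ))
    have hNi : N i = B ∙ J.mkQ (t ^ i) := by
      simp only [N, Ideal.span, Submodule.map_span, Set.image_singleton]
    have hspan : (B ∙ J.mkQ (t ^ i)) ⊔ N (i + 1) = N i := by rw [← hNi, sup_eq_left.mpr hle]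
    rw [← hspan]
    refine Submodule.covBy_span_singleton_sup_of_smul_mem (by rw [mem_N]; exact hnot i hi)
      fun r hr => ?_
    rw [← map_smul, smul_eq_mul, mem_N]
    have : (J ⊔ Ideal.span {t}) * Ideal.span {t ^ i} ≤ J ⊔ Ideal.span {t ^ (i + 1)} := by
      rw [Ideal.sup_mul, Ideal.span_singleton_mul_span_singleton, ← pow_succ']
      exact sup_le_sup_right Ideal.mul_le_left _
    exact this (Ideal.mul_mem_mul (hmax ▸ hr) (Ideal.mem_span_singleton_self _))
  obtain ⟨c, hhead, hlast, hlen⟩ := exists_compositionSeries_of_covBy N n hcov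
  exact ⟨c, hhead.trans hNn, hlast.trans hN0, hlen⟩

theorem Polynomial.mk_X_pow_notMem_span_mk_X_pow_succ {R : Type*} [CommRing R] [Nontrivial R]
    {i n : ℕ} (hi : i < n) :
    Ideal.Quotient.mk (Ideal.span {X ^ n}) (X ^ i : R[X]) ∉
      Ideal.span {Ideal.Quotient.mk (Ideal.span {X ^ n}) (X ^ (i + 1))} := by
  intro h
  obtain ⟨q, hq⟩ := Ideal.mem_span_singleton'.mp h
  obtain ⟨q, rfl⟩ := Ideal.Quotient.mk_surjective q
  rw [← map_mul, Ideal.Quotient.eq, Ideal.mem_span_singleton] at hq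
  have hdvd : X ^ (i + 1) ∣ (X ^ i : R[X]) :=
    (dvd_sub_right (dvd_mul_left _ q)).mp ((pow_dvd_pow X hi).trans hq)
  simpa using X_pow_dvd_iff.mp hdvd i i.lt_succ_self

namespace AdjoinRoot

section ResidueField

variable {A : Type*} [CommRing A] {f : A[X]}

theorem exists_eq_root_mul_add_algebraMap (x : AdjoinRoot f) :
    ∃ y a, x = root f * y + algebraMap A (AdjoinRoot f) a := by
  obtain ⟨p, rfl⟩ := mk_surjective x
  refine ⟨mk f p.divX, p.coeff 0, ?_⟩
  conv_lhs => rw [← X_mul_divX_add p]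
  rw [map_add, map_mul, mk_X, mk_C, algebraMap_eq]

variable [IsLocalRing A]

noncomputable def toResidueField (hf : f.coeff 0 ∈ maximalIdeal A) :
    AdjoinRoot f →+* ResidueField A :=
  lift (residue A) 0 (by rwa [eval₂_at_zero, residue_eq_zero_iff])

theorem ker_toResidueField (hf : f.coeff 0 ∈ maximalIdeal A) :
    RingHom.ker (toResidueField hf) =
      Ideal.map (algebraMap A (AdjoinRoot f)) (maximalIdeal A) ⊔ Ideal.span {root f} := by
  have hof (a : A) : toResidueField hf (algebraMap A _ a) = residue A a := lift_of _
  have hroot : toResidueField hf (root f) = 0 := lift_root _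
  apply le_antisymm
  · intro x hx
    obtain ⟨y, a, rfl⟩ := exists_eq_root_mul_add_algebraMap x
    have ha : a ∈ maximalIdeal A := by
      rwa [RingHom.mem_ker, map_add, map_mul, hroot, zero_mul, zero_add, hof,
        residue_eq_zero_iff] at hx
    exact add_mem (Ideal.mem_sup_right (Ideal.mul_mem_right _ _ (Ideal.mem_span_singleton_self _)))
      (Ideal.mem_sup_left (Ideal.mem_map_of_mem _ ha))
  · refine sup_le (Ideal.map_le_iff_le_comap.mpr fun a ha => ?_) ?_
    · rwa [Ideal.mem_comap, RingHom.mem_ker, hof, residue_eq_zero_iff]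
    · rw [Ideal.span_singleton_le_iff_mem, RingHom.mem_ker, hroot]

theorem isMaximal_map_maximalIdeal_sup_span_root (hf : f.coeff 0 ∈ maximalIdeal A) :
    (Ideal.map (algebraMap A (AdjoinRoot f)) (maximalIdeal A) ⊔ Ideal.span {root f}).IsMaximal :=
  ker_toResidueField hf ▸ RingHom.ker_isMaximal_of_surjective _ fun r =>
    let ⟨a, ha⟩ := residue_surjective r
    ⟨algebraMap A _ a, (lift_of _).trans ha⟩

theorem maximalIdeal_eq [IsLocalRing (AdjoinRoot f)] (hf : f.coeff 0 ∈ maximalIdeal A) :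
    maximalIdeal (AdjoinRoot f) =
      Ideal.map (algebraMap A (AdjoinRoot f)) (maximalIdeal A) ⊔ Ideal.span {root f} :=
  have := isMaximal_map_maximalIdeal_sup_span_root hf
  (eq_maximalIdeal this).symm

end ResidueField

variable {A : Type*} [CommRing A] {α : A} {n : ℕ}

local notation "A₁" => AdjoinRoot ((X : A[X]) ^ n - C α)

theorem root_X_pow_sub_C_pow : root ((X : A[X]) ^ n - C α) ^ n = algebraMap A A₁ α := by
  have h := mk_self (f := (X : A[X]) ^ n - C α)
  rwa [map_sub, map_pow, mk_X, mk_C, sub_eq_zero, ← algebraMap_eq] at h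

variable [IsLocalRing A]

theorem coeff_zero_X_pow_sub_C_mem (hn : n ≠ 0) (hα : α ∈ maximalIdeal A) :
    ((X : A[X]) ^ n - C α).coeff 0 ∈ maximalIdeal A := by
  simpa [coeff_X_pow, hn.symm] using hα

theorem isLocalRing_X_pow_sub_C (hn : n ≠ 0) (hα : α ∈ maximalIdeal A) : IsLocalRing A₁ := by
  have := (monic_X_pow_sub_C α hn).finite_adjoinRoot
  refine .of_isIntegral_of_le_radical
    (isMaximal_map_maximalIdeal_sup_span_root (coeff_zero_X_pow_sub_C_mem hn hα))
    (sup_le Ideal.le_radical ?_)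
  rw [Ideal.span_singleton_le_iff_mem]
  exact ⟨n, by rw [root_X_pow_sub_C_pow]; exact Ideal.mem_map_of_mem _ hα⟩

/-- Reduction modulo `𝔪`; it induces `A₁ ⧸ 𝔪A₁ ≅ k[X] ⧸ (Xⁿ)`. -/
noncomputable def toQuotientXPow (hα : α ∈ maximalIdeal A) :
    A₁ →+* (ResidueField A)[X] ⧸ Ideal.span {(X : (ResidueField A)[X]) ^ n} :=
  lift ((Ideal.Quotient.mk _).comp (C.comp (residue A))) (Ideal.Quotient.mk _ X) (by
    simp [(residue_eq_zero_iff α).mpr hα, ← map_pow])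

theorem root_pow_notMem_map_maximalIdeal_sup (hα : α ∈ maximalIdeal A) {i : ℕ} (hi : i < n) :
    root ((X : A[X]) ^ n - C α) ^ i ∉
      Ideal.map (algebraMap A A₁) (maximalIdeal A) ⊔ Ideal.span {root _ ^ (i + 1)} := by
  intro h
  have hker : Ideal.map (algebraMap A A₁) (maximalIdeal A) ≤ RingHom.ker (toQuotientXPow hα) :=
    Ideal.map_le_iff_le_comap.mpr fun a ha => by
      simp [toQuotientXPow, (residue_eq_zero_iff a).mpr ha]
  have := Ideal.mem_map_of_mem (toQuotientXPow hα) h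
  rw [Ideal.map_sup, (Ideal.map_eq_bot_iff_le_ker _).mpr hker, bot_sup_eq, Ideal.map_span,
    Set.image_singleton, map_pow, map_pow, toQuotientXPow, lift_root] at this
  exact mk_X_pow_notMem_span_mk_X_pow_succ hi this

theorem exists_compositionSeries_X_pow_sub_C [IsLocalRing A₁] (hn : n ≠ 0)
    (hα : α ∈ maximalIdeal A) :
    ∃ c : CompositionSeries (Submodule A₁ (A₁ ⧸ Ideal.map (algebraMap A A₁) (maximalIdeal A))),
      c.head = ⊥ ∧ c.last = ⊤ ∧ c.length = n :=
  exists_compositionSeries_of_maximalIdeal_eq_sup_span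
    (maximalIdeal_eq (coeff_zero_X_pow_sub_C_mem hn hα))
    (root_X_pow_sub_C_pow (α := α) ▸ Ideal.mem_map_of_mem _ hα)
    fun _ hi => root_pow_notMem_map_maximalIdeal_sup hα hi

theorem isRegularLocal_X_pow_sub_C [IsLocalRing A₁] (hA : IsRegularLocal A) (hn : n ≠ 0)
    (hα : α ∈ maximalIdeal A) (hα2 : α ∉ maximalIdeal A ^ 2) : IsRegularLocal A₁ := by
  classical
  obtain ⟨_, k, s, hs, hdim⟩ := hA
  have hmonic := monic_X_pow_sub_C α hn
  have := hmonic.free_adjoinRoot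
  have := hmonic.finite_adjoinRoot
  obtain ⟨i, hi⟩ := exists_span_range_update_eq_maximalIdeal hs hα hα2
  set u := Function.update (algebraMap A A₁ ∘ Function.update s i α) i (root _)
  refine ⟨inferInstance, k, u, ?_, by rw [ringKrullDim_eq_of_isIntegral (R := A), hdim]⟩
  have hroot : root _ ∈ Ideal.span (Set.range u) := Ideal.subset_span ⟨i, Function.update_self ..⟩
  have hαmem : (algebraMap A A₁ ∘ Function.update s i α) i ∈ Ideal.span (Set.range u) := by
    rw [Function.comp_apply, Function.update_self, ← root_X_pow_sub_C_pow]
    exact Ideal.pow_mem_of_mem _ hroot n (Nat.pos_of_ne_zero hn)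
  rw [Ideal.span_range_update hαmem, Set.range_comp, ← Ideal.map_span, hi,
    maximalIdeal_eq (coeff_zero_X_pow_sub_C_mem hn hα), sup_comm]

end AdjoinRoot

end

theorem adjoin_root_of_unramified_parameter_general
    (A₀ : Type*) [CommRing A₀] [IsLocalRing A₀]
    (hreg : IsRegularLocal A₀)
    (α : A₀) (hα : α ∈ IsLocalRing.maximalIdeal A₀)
    (hα2 : α ∉ (IsLocalRing.maximalIdeal A₀) ^ 2)
    (n : ℕ) (hn : 1 ≤ n) :
    letI A₁ := Polynomial A₀ ⧸ Ideal.span {(X : Polynomial A₀) ^ n - C α}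
    ∃ hloc : IsLocalRing A₁,
      (letI := hloc; IsRegularLocal A₁) ∧
      Module.Finite A₀ A₁ ∧ Module.Flat A₀ A₁ ∧
      ∃ c : CompositionSeries
          (Submodule A₁ (A₁ ⧸ Ideal.map (algebraMap A₀ A₁)
            (IsLocalRing.maximalIdeal A₀))),
        c.head = ⊥ ∧ c.last = ⊤ ∧ c.length = n := by
  have hn₀ : n ≠ 0 := Nat.one_le_iff_ne_zero.mp hn
  have hmonic := monic_X_pow_sub_C α hn₀
  have := hmonic.free_quotient
  have := AdjoinRoot.isLocalRing_X_pow_sub_C hn₀ hα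
  exact ⟨this, AdjoinRoot.isRegularLocal_X_pow_sub_C hreg hn₀ hα hα2, hmonic.finite_quotient,
    inferInstance, AdjoinRoot.exists_compositionSeries_X_pow_sub_C hn₀ hα⟩

/-- Let `A₀` be a Noetherian regular local ring of dimension ≥ 1,
`α ∈ 𝔪₀ \ 𝔪₀²`, and `n ≥ 1`.  Then `A₁ = A₀[t]/(tⁿ − α)` is a regular local
ring, `A₀ → A₁` is finite flat, and the length of `A₁/𝔪₀A₁` as an `A₁`-module
equals `n` (there is a composition series from `⊥` to `⊤` of length `n`). -/
theorem adjoin_root_of_unramified_parameter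
    (A₀ : Type*) [CommRing A₀] [IsLocalRing A₀] [IsNoetherianRing A₀]
    (hreg : IsRegularLocal A₀) (hdim : 1 ≤ ringKrullDim A₀)
    (α : A₀) (hα : α ∈ IsLocalRing.maximalIdeal A₀)
    (hα2 : α ∉ (IsLocalRing.maximalIdeal A₀) ^ 2)
    (n : ℕ) (hn : 1 ≤ n) :
    letI A₁ := Polynomial A₀ ⧸ Ideal.span {(X : Polynomial A₀) ^ n - C α}
    ∃ hloc : IsLocalRing A₁,
      (letI := hloc; IsRegularLocal A₁) ∧
      Module.Finite A₀ A₁ ∧ Module.Flat A₀ A₁ ∧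
      ∃ c : CompositionSeries
          (Submodule A₁ (A₁ ⧸ Ideal.map (algebraMap A₀ A₁)
            (IsLocalRing.maximalIdeal A₀))),
        c.head = ⊥ ∧ c.last = ⊤ ∧ c.length = n :=
  adjoin_root_of_unramified_parameter_general A₀ hreg α hα hα2 n hn
end

section
/- Let V be a perfectoid valuation ring of mixed characteristic (0, p), i.e., a p-adically complete and separated valuation ring whose fraction field is a perfectoid field of characteristic 0. Let 𝔭 = rad(pV) be the radical of the ideal (p). Then the localization V_𝔭 is again p-adically complete and separated, and hence is a perfectoid valuation ring of rank one. -/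
/-!
Every `s ∉ 𝔭 = rad(pV)` divides `p` in the valuation ring `V`, so `p V_𝔭 ⊆ V ⊆ V_𝔭`: a
`p`-adic Cauchy sequence in `V_𝔭` becomes one in `V` after multiplication by `p`, and its limit
in `V` is divisible by `p` in `V_𝔭`. Separatedness forces every nonzero prime of `V` to contain
`p`, hence `𝔭`, so the maximal ideal is the only nonzero prime of `V_𝔭`. Roots modulo `p` of
numerator and denominator give a root of a fraction, the root of the denominator staying
outside `𝔭` because `p ∈ 𝔭`.
-/

open Function IsLocalization

section AdicDivisibility

variable {R : Type*} [CommRing R] {r : R}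

theorem sModEq_span_singleton_pow_iff {a b : R} {n : ℕ} :
    a ≡ b [SMOD (Ideal.span {r} ^ n • ⊤ : Submodule R R)] ↔ r ^ n ∣ a - b := by
  rw [SModEq.sub_mem, smul_eq_mul, Ideal.mul_top, Ideal.span_singleton_pow,
    Ideal.mem_span_singleton]

theorem isHausdorff_span_singleton_iff :
    IsHausdorff (Ideal.span {r}) R ↔ ∀ x : R, (∀ n, r ^ n ∣ x) → x = 0 := by
  simp only [isHausdorff_iff, sModEq_span_singleton_pow_iff, sub_zero]

theorem isPrecomplete_span_singleton_iff :
    IsPrecomplete (Ideal.span {r}) R ↔ ∀ f : ℕ → R,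
      (∀ {m n}, m ≤ n → r ^ m ∣ f m - f n) → ∃ L, ∀ n, r ^ n ∣ f n - L := by
  simp only [isPrecomplete_iff, sModEq_span_singleton_pow_iff]

end AdicDivisibility

section MulMemRange

variable {R S : Type*} [CommRing R] [CommRing S] [Algebra R S] {r : R}
  (hinj : Injective (algebraMap R S))
  (hrange : ∀ x : S, algebraMap R S r * x ∈ (algebraMap R S).range)

include hinj hrange

theorem pow_dvd_of_algebraMap_pow_succ_dvd {w : R} {n : ℕ}
    (h : algebraMap R S r ^ (n + 1) ∣ algebraMap R S w) : r ^ n ∣ w := by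
  obtain ⟨c, hc⟩ := h
  obtain ⟨d, hd⟩ := hrange c
  refine ⟨d, hinj ?_⟩
  rw [hc, map_mul, map_pow, hd, pow_succ, mul_assoc]

theorem isHausdorff_span_algebraMap_of_mul_mem_range (hr : IsLeftRegular (algebraMap R S r))
    (hR : IsHausdorff (Ideal.span {r}) R) :
    IsHausdorff (Ideal.span {algebraMap R S r}) S := by
  rw [isHausdorff_span_singleton_iff] at hR ⊢
  intro x hx
  obtain ⟨w, hw⟩ := hrange x
  have hw0 : w = 0 := hR w fun n =>
    pow_dvd_of_algebraMap_pow_succ_dvd hinj hrange (hw ▸ dvd_mul_of_dvd_right (hx (n + 1)) _)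
  exact hr (by rw [← hw, hw0, map_zero, mul_zero] : algebraMap R S r * x = algebraMap R S r * 0)

theorem isPrecomplete_span_algebraMap_of_mul_mem_range (hr : IsLeftRegular (algebraMap R S r))
    (hR : IsPrecomplete (Ideal.span {r}) R) :
    IsPrecomplete (Ideal.span {algebraMap R S r}) S := by
  rw [isPrecomplete_span_singleton_iff] at hR ⊢
  intro f hf
  choose w hw using fun n => hrange (f n)
  have hw_cauchy : ∀ {m n}, m ≤ n → r ^ m ∣ w m - w n := fun {m n} hmn =>
    pow_dvd_of_algebraMap_pow_succ_dvd hinj hrange <| by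
      rw [map_sub, hw, hw, ← mul_sub, pow_succ']
      exact mul_dvd_mul_left _ (hf hmn)
  obtain ⟨W, hW⟩ := hR w hw_cauchy
  obtain ⟨b, hb⟩ := hW 1
  -- `r * (f 1 - b) = W`, so the limit in `S` is `W / r`.
  refine ⟨f 1 - algebraMap R S b, fun n => ?_⟩
  obtain ⟨c, hc⟩ := hW (n + 1)
  have htail : f (n + 1) - (f 1 - algebraMap R S b) = algebraMap R S r ^ n * algebraMap R S c :=
    hr <| by
      have hb' := congrArg (algebraMap R S) hb
      have hc' := congrArg (algebraMap R S) hc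
      simp only [map_sub, map_mul, map_pow, pow_one] at hb' hc'
      linear_combination hc' - hb' - hw (n + 1) + hw 1
  rw [← sub_add_sub_cancel (f n) (f (n + 1)), htail]
  exact dvd_add (hf n.le_succ) (dvd_mul_right _ _)

theorem isAdicComplete_span_algebraMap_of_mul_mem_range (hr : IsLeftRegular (algebraMap R S r))
    [hR : IsAdicComplete (Ideal.span {r}) R] : IsAdicComplete (Ideal.span {algebraMap R S r}) S
    where
  toIsHausdorff := isHausdorff_span_algebraMap_of_mul_mem_range hinj hrange hr hR.toIsHausdorff
  toIsPrecomplete :=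
    isPrecomplete_span_algebraMap_of_mul_mem_range hinj hrange hr hR.toIsPrecomplete

end MulMemRange

namespace ValuationRing

variable {V : Type*} [CommRing V] [IsDomain V] [ValuationRing V]

theorem isPrime_radical {I : Ideal V} (hI : I ≠ ⊤) : I.radical.IsPrime := by
  have key : ∀ {a b : V}, a ∣ b → a * b ∈ I.radical → b ∈ I.radical := by
    rintro a b hab ⟨n, hn⟩
    refine ⟨2 * n, I.mem_of_dvd ?_ hn⟩
    rw [pow_mul, sq]
    exact pow_dvd_pow_of_dvd (mul_dvd_mul_right hab b) n
  refine Ideal.isPrime_iff.2 ⟨by rwa [Ne, Ideal.radical_eq_top], fun {a b} hab => ?_⟩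
  rcases dvd_total a b with h | h
  · exact Or.inr (key h hab)
  · exact Or.inl (key h (mul_comm a b ▸ hab))

theorem dvd_of_notMem_span_singleton {r s : V} (hs : s ∉ Ideal.span {r}) : s ∣ r :=
  (dvd_total s r).resolve_right (mt Ideal.mem_span_singleton.2 hs)

theorem mem_of_isHausdorff {r : V} (hr : IsHausdorff (Ideal.span {r}) V) {q : Ideal V}
    [hq : q.IsPrime] (hq0 : q ≠ ⊥) : r ∈ q := by
  obtain ⟨x, hxq, hx0⟩ := Submodule.exists_mem_ne_zero_of_ne_bot hq0
  by_contra hrq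
  refine hx0 (isHausdorff_span_singleton_iff.1 hr x fun n => ?_)
  exact (dvd_total _ x).resolve_right fun h => hrq (hq.mem_of_pow_mem n (q.mem_of_dvd h hxq))

theorem of_isLocalization {S : Type*} [CommRing S] [IsDomain S] [Algebra V S] (M : Submonoid V)
    [IsLocalization M S] : ValuationRing S :=
  iff_ideal_total.2 ⟨fun _ _ =>
    ((ValuationRing.le_total_ideal (A := V)).total _ _).imp (under_le_under_iff M S).1
      (under_le_under_iff M S).1⟩

end ValuationRing

theorem Ideal.Quotient.forall_exists_pow_eq_span_singleton_iff {R : Type*} [CommRing R] (r : R)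
    (n : ℕ) : (∀ y : R ⧸ Ideal.span {r}, ∃ z, z ^ n = y) ↔ ∀ v : R, ∃ a, r ∣ a ^ n - v := by
  simp only [Ideal.Quotient.mk_surjective.forall, Ideal.Quotient.mk_surjective.exists, ← map_pow,
    Ideal.Quotient.eq, Ideal.mem_span_singleton]

namespace IsLocalization

variable {R S : Type*} [CommRing R] [CommRing S] [Algebra R S]

theorem algebraMap_mul_mem_range_of_forall_dvd (M : Submonoid R) [IsLocalization M S] {r : R}
    (h : ∀ s ∈ M, s ∣ r) (x : S) : algebraMap R S r * x ∈ (algebraMap R S).range := by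
  obtain ⟨⟨v, s⟩, rfl⟩ := mk'_surjective M x
  obtain ⟨u, hu⟩ := h s s.2
  refine ⟨u * v, ?_⟩
  rw [hu, map_mul, map_mul, mul_comm (algebraMap R S s), mul_assoc, mk'_spec']

variable (P : Ideal R) [P.IsPrime] [IsLocalization.AtPrime S P]

theorem AtPrime.forall_exists_pow_eq_quotient {r : R} (hr : r ∈ P) {n : ℕ} (hn : n ≠ 0)
    (h : ∀ y : R ⧸ Ideal.span {r}, ∃ z, z ^ n = y) :
    ∀ y : S ⧸ Ideal.span {algebraMap R S r}, ∃ z, z ^ n = y := by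
  rw [Ideal.Quotient.forall_exists_pow_eq_span_singleton_iff] at h ⊢
  intro x
  obtain ⟨⟨v, s⟩, rfl⟩ := mk'_surjective P.primeCompl x
  obtain ⟨a, c, hc⟩ := h s
  obtain ⟨b, d, hd⟩ := h v
  have ha : a ∈ P.primeCompl := fun haP => s.2 <| by
    rw [show (s : R) = a ^ n - r * c by rw [← hc]; ring]
    exact P.sub_mem (P.pow_mem_of_mem haP n (Nat.pos_of_ne_zero hn)) (P.mul_mem_right c hr)
  refine ⟨mk' S b ⟨a, ha⟩, ?_⟩
  have hnum : b ^ n * s - v * (⟨a, ha⟩ ^ n : P.primeCompl) = r * (d * s - v * c) := by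
    push_cast
    linear_combination s * hd - v * hc
  rw [← mk'_pow, ← mk'_sub, hnum, ← mul_mk'_eq_mk'_of_mul]
  exact dvd_mul_right _ _

theorem AtPrime.eq_maximalIdeal_of_forall_le (h : ∀ q : Ideal R, q.IsPrime → q ≠ ⊥ → P ≤ q)
    [IsLocalRing S] (Q : Ideal S) [hQ : Q.IsPrime] (hQ0 : Q ≠ ⊥) :
    Q = IsLocalRing.maximalIdeal S := by
  refine le_antisymm (IsLocalRing.le_maximalIdeal hQ.ne_top) ?_
  rw [← under_le_under_iff P.primeCompl S, AtPrime.under_maximalIdeal S P]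
  refine h _ inferInstance fun hbot => hQ0 ?_
  rw [← map_under P.primeCompl S Q, hbot, Ideal.map_bot]

end IsLocalization

theorem localization_at_radical_p_perfectoid_general
    (V : Type*) [CommRing V] [IsDomain V] [ValuationRing V]
    (p : ℕ)
    (hp0 : (p : V) ≠ 0) (hpu : ¬ IsUnit (p : V))
    (hcomplete : IsAdicComplete (Ideal.span {(p : V)}) V)
    (hϖ : ∃ ϖ : V, ϖ ^ p ∣ (p : V))
    (hfrob : ∀ y : V ⧸ Ideal.span {(p : V)}, ∃ z, z ^ p = y) :
    ∃ hpr : ((Ideal.span {(p : V)}).radical).IsPrime,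
      let L := Localization (@Ideal.primeCompl V _
        ((Ideal.span {(p : V)}).radical) hpr)
      IsAdicComplete (Ideal.span {(p : L)}) L ∧
      (∃ _hd : IsDomain L, ValuationRing L) ∧
      (p : L) ≠ 0 ∧ ¬ IsUnit (p : L) ∧
      (∃ ϖ : L, ϖ ^ p ∣ (p : L)) ∧
      (∀ y : L ⧸ Ideal.span {(p : L)}, ∃ z, z ^ p = y) ∧
      (∃! q : Ideal L, q.IsPrime ∧ q ≠ ⊥) := by
  set 𝔭 := (Ideal.span {(p : V)}).radical
  have h𝔭 : 𝔭.IsPrime :=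
    ValuationRing.isPrime_radical (by rwa [Ne, Ideal.span_singleton_eq_top])
  refine ⟨h𝔭, ?_⟩
  let L := Localization.AtPrime 𝔭
  have hp𝔭 : (p : V) ∈ 𝔭 := Ideal.le_radical (Ideal.mem_span_singleton_self _)
  have hinj : Injective (algebraMap V L) :=
    IsLocalization.injective L 𝔭.primeCompl_le_nonZeroDivisors
  have hpL : (p : L) = algebraMap V L p := (map_natCast _ p).symm
  have hpL0 : (p : L) ≠ 0 := hpL ▸ (map_ne_zero_iff _ hinj).2 hp0
  have hrange := IsLocalization.algebraMap_mul_mem_range_of_forall_dvd 𝔭.primeCompl (S := L)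
    fun s hs => ValuationRing.dvd_of_notMem_span_singleton fun h => hs (Ideal.le_radical h)
  have hreg : IsLeftRegular (algebraMap V L p) := mul_right_injective₀ (hpL ▸ hpL0)
  have hpnu : ¬IsUnit (p : L) := by
    rw [hpL, IsLocalization.AtPrime.isUnit_to_map_iff L 𝔭]
    exact not_not.2 hp𝔭
  have hn : p ≠ 0 := by
    rintro rfl
    exact hp0 Nat.cast_zero
  obtain ⟨ϖ, hϖp⟩ := hϖ
  refine ⟨hpL ▸ isAdicComplete_span_algebraMap_of_mul_mem_range hinj hrange hreg,
    ⟨inferInstance, ValuationRing.of_isLocalization 𝔭.primeCompl⟩, hpL0, hpnu,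
    ⟨algebraMap V L ϖ, hpL ▸ map_pow (algebraMap V L) ϖ p ▸ map_dvd _ hϖp⟩,
    hpL ▸ IsLocalization.AtPrime.forall_exists_pow_eq_quotient 𝔭 hp𝔭 hn hfrob,
    ⟨IsLocalRing.maximalIdeal L, ⟨inferInstance, ?_⟩, fun Q ⟨_, hQ0⟩ => ?_⟩⟩
  · exact (Submodule.ne_bot_iff _).2 ⟨_, (IsLocalRing.mem_maximalIdeal _).2 hpnu, hpL0⟩
  · refine IsLocalization.AtPrime.eq_maximalIdeal_of_forall_le 𝔭 (fun q hq hq0 => ?_) Q hQ0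
    exact hq.radical_le_iff.2 <| (Ideal.span_singleton_le_iff_mem q).2 <|
      ValuationRing.mem_of_isHausdorff hcomplete.toIsHausdorff hq0

/-- Let `V` be a perfectoid valuation ring of mixed
characteristic `(0,p)`: a `p`-adically complete and separated valuation ring
with `p ≠ 0`, `p` a nonunit, admitting `ϖ` with `ϖ^p ∣ p`, and with surjective
Frobenius on `V/p`.  Let `𝔭 = rad(pV)`.  Then `𝔭` is prime and the
localization `V_𝔭` is again `p`-adically complete and separated, and is a
perfectoid valuation ring of rank one (a valuation ring, `p` ≠ 0, `ϖ^p ∣ p`,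
Frobenius surjective mod `p`, with exactly one nonzero prime ideal). -/
theorem localization_at_radical_p_perfectoid
    (V : Type*) [CommRing V] [IsDomain V] [ValuationRing V]
    (p : ℕ) (hp : p.Prime)
    (hp0 : (p : V) ≠ 0) (hpu : ¬ IsUnit (p : V))
    (hcomplete : IsAdicComplete (Ideal.span {(p : V)}) V)
    (hϖ : ∃ ϖ : V, ϖ ^ p ∣ (p : V))
    (hfrob : ∀ y : V ⧸ Ideal.span {(p : V)}, ∃ z, z ^ p = y) :
    ∃ hpr : ((Ideal.span {(p : V)}).radical).IsPrime,
      let L := Localization (@Ideal.primeCompl V _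
        ((Ideal.span {(p : V)}).radical) hpr)
      IsAdicComplete (Ideal.span {(p : L)}) L ∧
      (∃ _hd : IsDomain L, ValuationRing L) ∧
      (p : L) ≠ 0 ∧ ¬ IsUnit (p : L) ∧
      (∃ ϖ : L, ϖ ^ p ∣ (p : L)) ∧
      (∀ y : L ⧸ Ideal.span {(p : L)}, ∃ z, z ^ p = y) ∧
      (∃! q : Ideal L, q.IsPrime ∧ q ≠ ⊥) :=
  localization_at_radical_p_perfectoid_general V p hp0 hpu hcomplete hϖ hfrob
end

section
/- Let R be a ring and I ⊆ R a finitely generated ideal generated by a regular sequence (more specifically, assume I is generated by a single nonzerodivisor, or that I is a regular ideal). Then I/I² is a projective R/I-module and the natural map Sym^i_{R/I}(I/I²) → I^i/I^{i+1} is an isomorphism for all i ≥ 0. -/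
/-! Multiplication by `tⁱ` maps `R` onto `(tⁱ)/(tⁱ⁺¹)`, and since `t` is a nonzerodivisor we may
cancel `tⁱ` in `tⁱ r = tⁱ⁺¹ s` to see that the kernel is exactly `(t)`. For `i = 1` this makes
`I/I²` free of rank one over `R/I`, hence projective. -/

open LinearMap

section

variable {R : Type*} [CommRing R]

theorem IsLeftRegular.pow_mul_mem_span_singleton_pow_succ_iff {t : R} (ht : IsLeftRegular t)
    (i : ℕ) (r : R) : t ^ i * r ∈ Ideal.span {t} ^ (i + 1) ↔ r ∈ Ideal.span {t} := by
  rw [Ideal.span_singleton_pow, Ideal.mem_span_singleton, Ideal.mem_span_singleton, pow_succ,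
    (ht.pow i).dvd_cancel_left]

theorem Ideal.toSpanSingleton_surjective_of_eq_span {I : Ideal R} {x : R}
    (hI : I = Ideal.span {x}) (hx : x ∈ I) :
    Function.Surjective (toSpanSingleton R I ⟨x, hx⟩) := by
  rintro ⟨y, hy⟩
  rw [hI, Ideal.mem_span_singleton'] at hy
  obtain ⟨r, rfl⟩ := hy
  exact ⟨r, rfl⟩

theorem LinearMap.toSpanSingleton_map_surjective {M N : Type*} [AddCommGroup M] [Module R M]
    [AddCommGroup N] [Module R N] (g : M →ₗ[R] N) (hg : Function.Surjective g) {m : M}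
    (hm : Function.Surjective (toSpanSingleton R M m)) :
    Function.Surjective (toSpanSingleton R N (g m)) := by
  rw [← comp_toSpanSingleton]
  exact hg.comp hm

theorem Module.Free.of_surjective_of_ker_eq {I : Ideal R} {M : Type*} [AddCommGroup M]
    [Module R M] [Module (R ⧸ I) M] [IsScalarTower R (R ⧸ I) M] (f : R →ₗ[R] M)
    (hf : Function.Surjective f) (hker : ker f = I) : Module.Free (R ⧸ I) M :=
  let e : (R ⧸ I) ≃ₗ[R] M :=
    (Submodule.quotEquivOfEq _ _ hker.symm).trans (f.quotKerEquivOfSurjective hf)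
  .of_equiv (e.extendScalarsOfSurjective Ideal.Quotient.mk_surjective)

variable (t : R)

theorem Ideal.toSpanSingleton_toCotangent_surjective :
    Function.Surjective (toSpanSingleton R (Ideal.span {t}).Cotangent
      ((Ideal.span {t}).toCotangent ⟨t, Ideal.mem_span_singleton_self t⟩)) :=
  toSpanSingleton_map_surjective _ (Ideal.toCotangent_surjective _)
    (Ideal.toSpanSingleton_surjective_of_eq_span rfl _)

theorem Ideal.toSpanSingleton_mk_pow_surjective (i : ℕ) :
    Function.Surjective (toSpanSingleton R
      (↥(Ideal.span {t} ^ i) ⧸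
        Submodule.comap (Submodule.subtype (Ideal.span {t} ^ i)) (Ideal.span {t} ^ (i + 1)))
      (Submodule.Quotient.mk ⟨t ^ i, Ideal.pow_mem_pow (Ideal.mem_span_singleton_self t) i⟩)) :=
  toSpanSingleton_map_surjective (Submodule.mkQ _) (Submodule.mkQ_surjective _)
    (Ideal.toSpanSingleton_surjective_of_eq_span (Ideal.span_singleton_pow t i) _)

variable {t}

theorem IsLeftRegular.ker_toSpanSingleton_toCotangent (ht : IsLeftRegular t) :
    ker (toSpanSingleton R (Ideal.span {t}).Cotangent
      ((Ideal.span {t}).toCotangent ⟨t, Ideal.mem_span_singleton_self t⟩)) = Ideal.span {t} := by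
  ext r
  rw [mem_ker, toSpanSingleton_apply, ← map_smul, Ideal.toCotangent_eq_zero, Submodule.coe_smul,
    smul_eq_mul, mul_comm]
  simpa only [pow_one] using ht.pow_mul_mem_span_singleton_pow_succ_iff 1 r

theorem IsLeftRegular.ker_toSpanSingleton_mk_pow (ht : IsLeftRegular t) (i : ℕ) :
    ker (toSpanSingleton R
      (↥(Ideal.span {t} ^ i) ⧸
        Submodule.comap (Submodule.subtype (Ideal.span {t} ^ i)) (Ideal.span {t} ^ (i + 1)))
      (Submodule.Quotient.mk ⟨t ^ i, Ideal.pow_mem_pow (Ideal.mem_span_singleton_self t) i⟩)) =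
      Ideal.span {t} := by
  ext r
  rw [mem_ker, toSpanSingleton_apply, ← Submodule.Quotient.mk_smul, Submodule.Quotient.mk_eq_zero,
    Submodule.mem_comap, Submodule.subtype_apply, Submodule.coe_smul, smul_eq_mul, mul_comm]
  exact ht.pow_mul_mem_span_singleton_pow_succ_iff i r

end

/-- Let `R` be a ring and `I = (t)` with `t` a nonzerodivisor.
Then `I/I²` is a projective `R/I`-module, and the natural map
`Sym^i_{R/I}(I/I²) → I^i/I^{i+1}` is an isomorphism for all `i ≥ 0`.  Since
`Sym^i(I/I²)` is free of rank 1 over `R/I` on the `i`-th symmetric power of the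
class of `t`, the natural map being an isomorphism is expressed concretely:
for every `i`, the map `R → I^i/I^{i+1}`, `r ↦ r·[tⁱ]` (the image under the
natural map of `r` times the `i`-th symmetric power of the class of `t`), is
surjective with kernel exactly `I`, i.e. it induces an isomorphism
`R/I ≅ I^i/I^{i+1}`. -/
theorem cotangent_projective_and_sym_powers_of_principal
    (R : Type*) [CommRing R] (t : R)
    (ht : ∀ x : R, t * x = 0 → x = 0) :
    Module.Projective (R ⧸ Ideal.span {t}) (Ideal.span {t}).Cotangent ∧
    ∀ i : ℕ,
      Function.Surjective
        (LinearMap.toSpanSingleton R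
          (↥(Ideal.span {t} ^ i) ⧸ Submodule.comap
            (Submodule.subtype (Ideal.span {t} ^ i)) (Ideal.span {t} ^ (i + 1)))
          (Submodule.Quotient.mk
            ⟨t ^ i, Ideal.pow_mem_pow (Ideal.mem_span_singleton_self t) i⟩)) ∧
      LinearMap.ker
        (LinearMap.toSpanSingleton R
          (↥(Ideal.span {t} ^ i) ⧸ Submodule.comap
            (Submodule.subtype (Ideal.span {t} ^ i)) (Ideal.span {t} ^ (i + 1)))
          (Submodule.Quotient.mk
            ⟨t ^ i, Ideal.pow_mem_pow (Ideal.mem_span_singleton_self t) i⟩))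
        = Ideal.span {t} := by
  have hreg : IsLeftRegular t := isLeftRegular_iff_right_eq_zero_of_mul.mpr ht
  have := Module.Free.of_surjective_of_ker_eq _
    (Ideal.toSpanSingleton_toCotangent_surjective t) hreg.ker_toSpanSingleton_toCotangent
  exact ⟨inferInstance, fun i =>
    ⟨Ideal.toSpanSingleton_mk_pow_surjective t i, hreg.ker_toSpanSingleton_mk_pow i⟩⟩
end

section
/- Let B and C be perfect 𝔽_p-algebras (Frobenius bijective) and let B → C be a surjective ring homomorphism. Then the multiplication map C ⊗_B^L C → C is an isomorphism in the derived category; equivalently Tor_i^B(C, C) = 0 for i > 0 and C ⊗_B C ≅ C. -/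
/-!
Let `J` be the kernel of `B → C` and `F → C` a projective resolution over `B`. Since
`C ⊗_B F = F / J F`, the vanishing of `Tor` says that a cycle modulo `J F` is a boundary
modulo `J F`. Any element of `J F` lies in `I F`, where `I ⊆ J` is generated by the `p`-power
roots of finitely many elements of `J` (it stays inside `J` because `C` is reduced), so one adds
the generators `f` one at a time. If `d x ≡ h^p z` modulo `I F` with `h` a root of `f`, then
`h^p · d z ∈ I F`; as `I` is closed under `p`-th roots and `F` is projective, already
`h · d z ∈ I F`, so `h z ≡ d y` modulo `I F` (in degree `0` because `h ∈ J`). Then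
`x - h^{p-1} y` is a cycle modulo `I F`, and `h^{p-1} y` lies in `(f^{1/p^∞}) F`.
-/

open CategoryTheory TensorProduct Pointwise

universe u

section PerfectSpan

variable {B : Type*} [CommRing B] {p : ℕ}

variable (p) in
def perfectSpan (S : Set B) : Ideal B :=
  Ideal.span {x | ∃ k, x ^ p ^ k ∈ S}

lemma subset_perfectSpan (S : Set B) : S ⊆ perfectSpan p S :=
  fun x hx => Ideal.subset_span ⟨0, by rwa [pow_zero, pow_one]⟩

@[simp]
lemma perfectSpan_empty : perfectSpan p (∅ : Set B) = ⊥ := by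
  simp [perfectSpan]

lemma perfectSpan_union (S T : Set B) :
    perfectSpan p (S ∪ T) = perfectSpan p S ⊔ perfectSpan p T := by
  rw [perfectSpan, perfectSpan, perfectSpan, ← Ideal.span_union]
  congr 1
  ext x
  simp [exists_or]

lemma perfectSpan_le_ker {C : Type*} [CommRing C] [ExpChar C p] [PerfectRing C p]
    (φ : B →+* C) {S : Set B} (hS : S ⊆ RingHom.ker φ) : perfectSpan p S ≤ RingHom.ker φ := by
  refine Ideal.span_le.2 fun x ⟨k, hk⟩ => ?_
  have : iterateFrobeniusEquiv C p k (φ x) = 0 := by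
    rw [iterateFrobeniusEquiv_def, ← map_pow]
    exact hS hk
  exact (map_eq_zero_iff _ (iterateFrobeniusEquiv C p k).injective).1 this

variable [ExpChar B p] [PerfectRing B p]

lemma mem_perfectSpan_of_pow_mem {S : Set B} {x : B} (hx : x ^ p ∈ perfectSpan p S) :
    x ∈ perfectSpan p S := by
  have hroot : (frobeniusEquiv B p).symm '' {x | ∃ k, x ^ p ^ k ∈ S} ⊆
      {x | ∃ k, x ^ p ^ k ∈ S} := by
    rintro _ ⟨y, ⟨k, hk⟩, rfl⟩
    exact ⟨k + 1, by rwa [pow_succ', pow_mul, frobeniusEquiv_symm_pow_p]⟩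
  rw [← frobeniusEquiv_symm_pow B p x]
  have := Ideal.mem_map_of_mem (frobeniusEquiv B p).symm hx
  rw [perfectSpan, Ideal.map_span] at this
  exact Ideal.span_mono hroot this

lemma iterateFrobeniusEquiv_symm_succ_pow (f : B) (k : ℕ) :
    (iterateFrobeniusEquiv B p (k + 1)).symm f ^ p = (iterateFrobeniusEquiv B p k).symm f := by
  rw [add_comm, iterateFrobeniusEquiv_symm_add_apply, iterateFrobeniusEquiv_one,
    frobeniusEquiv_symm_pow_p]

lemma perfectSpan_singleton_eq_iSup (f : B) :
    perfectSpan p {f} = ⨆ k, Ideal.span {(iterateFrobeniusEquiv B p k).symm f} := by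
  refine le_antisymm (Ideal.span_le.2 fun x ⟨k, hk⟩ => ?_) (iSup_le fun k => ?_)
  · have : x = (iterateFrobeniusEquiv B p k).symm f := (RingEquiv.eq_symm_apply _).2 hk
    exact Ideal.mem_iSup_of_mem k (Ideal.subset_span this)
  · exact Ideal.span_le.2 <| Set.singleton_subset_iff.2 <|
      Ideal.subset_span ⟨k, (iterateFrobeniusEquiv B p k).apply_symm_apply f⟩

lemma monotone_span_iterateFrobeniusEquiv_symm (f : B) :
    Monotone fun k => Ideal.span {(iterateFrobeniusEquiv B p k).symm f} :=
  monotone_nat_of_le_succ fun k => Ideal.span_singleton_le_span_singleton.2 <| by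
    rw [← iterateFrobeniusEquiv_symm_succ_pow f k]
    exact dvd_pow_self _ (expChar_pos B p).ne'

lemma exists_pow_smul_of_mem_perfectSpan_singleton_smul {M : Type*} [AddCommGroup M]
    [Module B M] {f : B} {a : M} (ha : a ∈ perfectSpan p {f} • (⊤ : Submodule B M)) :
    ∃ h ∈ perfectSpan p {f}, ∃ z : M, a = h ^ p • z := by
  rw [perfectSpan_singleton_eq_iSup, Submodule.iSup_smul] at ha
  obtain ⟨k, hk⟩ := (Submodule.mem_iSup_of_directed _ (Monotone.directed_le fun _ _ hkl =>
    Submodule.smul_mono_left (monotone_span_iterateFrobeniusEquiv_symm f hkl))).1 ha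
  rw [Submodule.ideal_span_singleton_smul, Submodule.mem_smul_pointwise_iff_exists] at hk
  obtain ⟨z, -, rfl⟩ := hk
  exact ⟨_, Ideal.subset_span ⟨k + 1, (iterateFrobeniusEquiv B p (k + 1)).apply_symm_apply f⟩, z,
    by rw [iterateFrobeniusEquiv_symm_succ_pow]⟩

end PerfectSpan

section SmulTop

variable {B M : Type*} [CommRing B] [AddCommGroup M] [Module B M]

lemma mem_smul_top_finsupp_iff {ι : Type*} (I : Ideal B) (v : ι →₀ B) :
    v ∈ I • (⊤ : Submodule B (ι →₀ B)) ↔ ∀ i, v i ∈ I := by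
  refine ⟨fun hv i => ?_, fun hv => ?_⟩
  · refine Submodule.smul_induction_on hv (fun r hr m _ => ?_) (fun a b ha hb => ?_)
    · exact Ideal.mul_mem_right _ _ hr
    · simpa using add_mem ha hb
  · rw [← Finsupp.sum_single v]
    refine Submodule.finsuppSum_mem _ _ _ _ fun i _ => ?_
    rw [← mul_one (v i), ← smul_eq_mul, ← Finsupp.smul_single]
    exact Submodule.smul_mem_smul (hv i) Submodule.mem_top

lemma smul_mem_smul_top_of_pow_smul_mem [Module.Projective B M] {I : Ideal B} {n : ℕ}
    (hn : n ≠ 0) (hI : ∀ b, b ^ n ∈ I → b ∈ I) {h : B} {x : M}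
    (hx : h ^ n • x ∈ I • (⊤ : Submodule B M)) : h • x ∈ I • (⊤ : Submodule B M) := by
  obtain ⟨s, hs⟩ := Module.projective_def.1 ‹_›
  have hsx : ∀ i, h ^ n * s x i ∈ I := by
    have := Submodule.smul_top_le_comap_smul_top I s hx
    rw [Submodule.mem_comap, map_smul, mem_smul_top_finsupp_iff] at this
    simpa using this
  have hhsx : h • s x ∈ I • (⊤ : Submodule B (M →₀ B)) := by
    refine (mem_smul_top_finsupp_iff I _).2 fun i => hI _ ?_
    obtain ⟨m, rfl⟩ := Nat.exists_eq_add_one_of_ne_zero hn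
    convert I.mul_mem_right (s x i ^ m) (hsx i) using 1
    simp only [Finsupp.smul_apply, smul_eq_mul]
    ring
  have := Submodule.smul_top_le_comap_smul_top I (Finsupp.linearCombination B id) hhsx
  rwa [Submodule.mem_comap, map_smul, hs] at this

lemma exists_finset_subset_mem_span_smul_top {I : Ideal B} {x : M}
    (hx : x ∈ I • (⊤ : Submodule B M)) :
    ∃ s : Finset B, (s : Set B) ⊆ I ∧ x ∈ Ideal.span (s : Set B) • (⊤ : Submodule B M) := by
  classical
  refine Submodule.smul_induction_on hx (fun r hr m _ => ?_) ?_
  · exact ⟨{r}, by simpa using hr,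
      Submodule.smul_mem_smul (Ideal.subset_span (by simp)) Submodule.mem_top⟩
  · rintro a b ⟨s, hsI, ha⟩ ⟨t, htI, hb⟩
    refine ⟨s ∪ t, by simpa using And.intro hsI htI, add_mem ?_ ?_⟩
    · exact Submodule.smul_mono_left (Ideal.span_mono (by simp)) ha
    · exact Submodule.smul_mono_left (Ideal.span_mono (by simp)) hb

end SmulTop

lemma one_tmul_eq_zero_iff_mem_ker_smul_top {B C M : Type*} [CommRing B] [CommRing C]
    [Algebra B C] [AddCommGroup M] [Module B M] (hsurj : Function.Surjective (algebraMap B C))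
    (x : M) :
    (1 : C) ⊗ₜ[B] x = 0 ↔ x ∈ RingHom.ker (algebraMap B C) • (⊤ : Submodule B M) := by
  let σ := (Ideal.quotientKerAlgEquivOfSurjective (f := Algebra.ofId B C) hsurj).symm
  have hσ : σ.toLinearEquiv.rTensor M (1 ⊗ₜ x) = 1 ⊗ₜ x := by
    rw [LinearEquiv.rTensor_tmul, AlgEquiv.toLinearEquiv_apply, map_one]
  rw [← (σ.toLinearEquiv.rTensor M).map_eq_zero_iff, hσ,
    ← (quotTensorEquivQuotSMul M _).map_eq_zero_iff, quotTensorEquivQuotSMul_mk_one_tmul,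
    Submodule.Quotient.mk_eq_zero]
  rfl

section ExactModulo

variable {B C : Type*} [CommRing B] [CommRing C] [Algebra B C]
  {F : ℕ → Type*} [∀ n, AddCommGroup (F n)] [∀ n, Module B (F n)]

/-- Exactness of `(B ⧸ I) ⊗[B] F` in positive degrees, read inside `F` as `F ⧸ I • F`. -/
def ExactModulo (d : ∀ n, F (n + 1) →ₗ[B] F n) (I : Ideal B) : Prop :=
  ∀ n (x : F (n + 1)), d n x ∈ I • (⊤ : Submodule B (F n)) →
    ∃ y, x - d (n + 1) y ∈ I • (⊤ : Submodule B (F (n + 1)))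

variable {d : ∀ n, F (n + 1) →ₗ[B] F n}

lemma exactModulo_bot (hex : ∀ n (x : F (n + 1)), d n x = 0 → ∃ y, d (n + 1) y = x) :
    ExactModulo d ⊥ := by
  intro n x hx
  rw [Submodule.bot_smul, Submodule.mem_bot] at hx
  obtain ⟨y, rfl⟩ := hex n x hx
  exact ⟨y, by simp⟩

lemma exact_lTensor_of_exactModulo_ker (hsurj : Function.Surjective (algebraMap B C))
    (hdd : ∀ m, d m ∘ₗ d (m + 1) = 0)
    (hJ : ExactModulo d (RingHom.ker (algebraMap B C))) (n : ℕ) :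
    Function.Exact ((d (n + 1)).lTensor C) ((d n).lTensor C) := by
  refine fun ξ => ⟨fun hξ => ?_, ?_⟩
  · obtain ⟨x, rfl⟩ := TensorProduct.mk_surjective B _ C hsurj ξ
    rw [TensorProduct.mk_apply, LinearMap.lTensor_tmul,
      one_tmul_eq_zero_iff_mem_ker_smul_top hsurj] at hξ
    obtain ⟨y, hy⟩ := hJ n x hξ
    refine ⟨1 ⊗ₜ y, ?_⟩
    rw [LinearMap.lTensor_tmul, TensorProduct.mk_apply, eq_comm, ← sub_eq_zero, ← tmul_sub,
      one_tmul_eq_zero_iff_mem_ker_smul_top hsurj]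
    exact hy
  · rintro ⟨w, rfl⟩
    rw [← LinearMap.comp_apply, ← LinearMap.lTensor_comp, hdd, LinearMap.lTensor_zero,
      LinearMap.zero_apply]

lemma ExactModulo.exists_smul_sub_mem_of_pow_smul {I : Ideal B} (hI : ExactModulo d I)
    {n : ℕ} (hn : n ≠ 0) (hIroot : ∀ b, b ^ n ∈ I → b ∈ I) {m : ℕ}
    [Module.Projective B (F m)] {h : B} {z : F (m + 1)}
    (hz : d m (h ^ n • z) ∈ I • (⊤ : Submodule B (F m))) :
    ∃ y, h • z - d (m + 1) y ∈ I • (⊤ : Submodule B (F (m + 1))) := by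
  refine hI m _ ?_
  rw [map_smul] at hz ⊢
  exact smul_mem_smul_top_of_pow_smul_mem hn hIroot hz

lemma ExactModulo.sup {I K : Ideal B} {n : ℕ} (hI : ExactModulo d I) (hn : 2 ≤ n)
    (hproj : ∀ m, Module.Projective B (F m)) (hdd : ∀ m, d m ∘ₗ d (m + 1) = 0)
    (ε : F 0 →ₗ[B] C) (hex₀ : ∀ x : F 0, ε x = 0 → ∃ y, d 0 y = x)
    (hIroot : ∀ b, b ^ n ∈ I → b ∈ I)
    (hK : ∀ m (a : F m), a ∈ K • (⊤ : Submodule B (F m)) → ∃ h ∈ K, ∃ z, a = h ^ n • z)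
    (hKε : K ≤ RingHom.ker (algebraMap B C)) :
    ExactModulo d (K ⊔ I) := by
  intro m x hx
  rw [Submodule.sup_smul] at hx
  obtain ⟨a, ha, w, hw, hsum⟩ := Submodule.mem_sup.1 hx
  obtain ⟨h, hhK, z, rfl⟩ := hK m a ha
  obtain ⟨y, hy⟩ : ∃ y, h • z - d m y ∈ I • (⊤ : Submodule B (F m)) := by
    cases m with
    | zero =>
      obtain ⟨y, hy⟩ := hex₀ (h • z) (by rw [map_smul, Algebra.smul_def, hKε hhK, zero_mul])
      exact ⟨y, by simp [hy]⟩
    | succ m =>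
      have := hproj m
      refine hI.exists_smul_sub_mem_of_pow_smul (by omega) hIroot ?_
      rw [eq_sub_of_add_eq hsum, map_sub, ← LinearMap.comp_apply, hdd, LinearMap.zero_apply,
        zero_sub]
      exact neg_mem (Submodule.smul_top_le_comap_smul_top I (d m) hw)
  have hcollapse : h ^ (n - 1) • h • z = h ^ n • z := by
    rw [smul_smul, ← pow_succ, Nat.sub_add_cancel (by omega)]
  obtain ⟨y', hy'⟩ := hI m (x - h ^ (n - 1) • y) <| by
    have : d m (x - h ^ (n - 1) • y) = h ^ (n - 1) • (h • z - d m y) + w := by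
      rw [map_sub, map_smul, ← hsum, smul_sub, hcollapse]
      abel
    rw [this]
    exact add_mem (Submodule.smul_mem _ _ hy) hw
  refine ⟨y', ?_⟩
  rw [Submodule.sup_smul]
  exact Submodule.mem_sup.2 ⟨h ^ (n - 1) • y,
    Submodule.smul_mem_smul (K.pow_mem_of_mem hhK _ (by omega)) Submodule.mem_top, _, hy',
    by abel⟩

variable {p : ℕ} [ExpChar B p] [PerfectRing B p] [ExpChar C p] [PerfectRing C p]

lemma exactModulo_perfectSpan (hp : 2 ≤ p)
    (hproj : ∀ m, Module.Projective B (F m)) (hdd : ∀ m, d m ∘ₗ d (m + 1) = 0)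
    (hex : ∀ m (x : F (m + 1)), d m x = 0 → ∃ y, d (m + 1) y = x)
    (ε : F 0 →ₗ[B] C) (hex₀ : ∀ x : F 0, ε x = 0 → ∃ y, d 0 y = x)
    (s : Finset B) (hs : (s : Set B) ⊆ RingHom.ker (algebraMap B C)) :
    ExactModulo d (perfectSpan p (s : Set B)) := by
  classical
  induction s using Finset.induction_on with
  | empty => simpa using exactModulo_bot hex
  | insert f s _ ih =>
    rw [Finset.coe_insert, Set.insert_subset_iff] at hs
    rw [Finset.coe_insert, Set.insert_eq, perfectSpan_union]
    exact (ih hs.2).sup hp hproj hdd ε hex₀ (fun _ => mem_perfectSpan_of_pow_mem)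
      (fun m _ => exists_pow_smul_of_mem_perfectSpan_singleton_smul)
      (perfectSpan_le_ker _ (Set.singleton_subset_iff.2 hs.1))

lemma exactModulo_ker (hp : 2 ≤ p)
    (hproj : ∀ m, Module.Projective B (F m)) (hdd : ∀ m, d m ∘ₗ d (m + 1) = 0)
    (hex : ∀ m (x : F (m + 1)), d m x = 0 → ∃ y, d (m + 1) y = x)
    (ε : F 0 →ₗ[B] C) (hex₀ : ∀ x : F 0, ε x = 0 → ∃ y, d 0 y = x) :
    ExactModulo d (RingHom.ker (algebraMap B C)) := by
  intro n x hx
  obtain ⟨s, hsJ, hxs⟩ := exists_finset_subset_mem_span_smul_top hx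
  obtain ⟨y, hy⟩ := exactModulo_perfectSpan hp hproj hdd hex ε hex₀ s hsJ n x
    (Submodule.smul_mono_left (Ideal.span_le.2 (subset_perfectSpan _)) hxs)
  exact ⟨y, Submodule.smul_mono_left (perfectSpan_le_ker _ hsJ) hy⟩

end ExactModulo

lemma isZero_Tor_succ_of_exact_lTensor {R : Type u} [CommRing R] (X Y : ModuleCat.{u} R)
    (P : ProjectiveResolution Y) (n : ℕ)
    (h : Function.Exact ((P.complex.d (n + 2) (n + 1)).hom.lTensor X)
      ((P.complex.d (n + 1) n).hom.lTensor X)) :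
    Limits.IsZero (((Tor (ModuleCat.{u} R) (n + 1)).obj X).obj Y) := by
  refine Limits.IsZero.of_iso ?_ (P.isoLeftDerivedObj _ (n + 1))
  refine (HomologicalComplex.exactAt_iff_isZero_homology _ _).1 ?_
  rw [HomologicalComplex.exactAt_iff' _ (n + 2) (n + 1) n (by simp) (by simp),
    ShortComplex.moduleCat_exact_iff]
  exact fun x hx => (h x).1 hx

lemma bijective_lmul'_of_surjective {B C : Type*} [CommRing B] [CommRing C] [Algebra B C]
    (hsurj : Function.Surjective (algebraMap B C)) :
    Function.Bijective (Algebra.TensorProduct.lmul' (S := C) B) :=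
  ⟨(Algebra.isEpi_of_surjective_algebraMap B C hsurj).injective_lift_mul,
    fun c => ⟨1 ⊗ₜ c, by simp⟩⟩

/-- Let `B → C` be a surjective homomorphism of perfect
`𝔽_p`-algebras.  Then the multiplication map `C ⊗_B C → C` is an isomorphism
and `Tor_i^B(C, C) = 0` for `i > 0`; i.e. `C ⊗_B^L C ≅ C`. -/
theorem derived_idempotent_of_perfect_surjection
    (p : ℕ) (hp : p.Prime)
    (B : Type u) [CommRing B] [ExpChar B p] [PerfectRing B p]
    (C : Type u) [CommRing C] [ExpChar C p] [PerfectRing C p]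
    [Algebra B C] (hsurj : Function.Surjective (algebraMap B C)) :
    Function.Bijective (Algebra.TensorProduct.lmul' (S := C) B) ∧
    ∀ i : ℕ, 0 < i →
      Limits.IsZero
        (((Tor (ModuleCat.{u} B) i).obj (ModuleCat.of B C)).obj
          (ModuleCat.of B C)) := by
  refine ⟨bijective_lmul'_of_surjective hsurj, fun i hi => ?_⟩
  obtain ⟨n, rfl⟩ := Nat.exists_eq_add_one_of_ne_zero hi.ne'
  obtain ⟨P⟩ : Nonempty (ProjectiveResolution (ModuleCat.of B C)) := HasProjectiveResolution.out
  let F m := P.complex.X m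
  let d m : F (m + 1) →ₗ[B] F m := (P.complex.d (m + 1) m).hom
  have hdd : ∀ m, d m ∘ₗ d (m + 1) = 0 := fun m =>
    congr_arg ModuleCat.Hom.hom (P.complex.d_comp_d (m + 2) (m + 1) m)
  let ε : F 0 →ₗ[B] C := (P.π.f 0).hom
  have hex : ∀ m (x : F (m + 1)), d m x = 0 → ∃ y, d (m + 1) y = x := fun m =>
    (ShortComplex.moduleCat_exact_iff _).1 (P.exact_succ m)
  have hex₀ : ∀ x, ε x = 0 → ∃ y, d 0 y = x := (ShortComplex.moduleCat_exact_iff _).1 P.exact₀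
  have hJ : ExactModulo d (RingHom.ker (algebraMap B C)) := exactModulo_ker hp.two_le
    (fun m => (IsProjective.iff_projective _).2 (P.projective m)) hdd hex ε hex₀
  exact isZero_Tor_succ_of_exact_lTensor _ _ P n
    (exact_lTensor_of_exactModulo_ker hsurj hdd hJ n)
end

section
/- Let f : (B, I) → (C, J) be a map of pairs of commutative 𝔽_p-algebras with I ⊆ B, J ⊆ C ideals, such that f restricts to an isomorphism I ≅ J (a Milnor/excision situation). Then the induced map of perfections (B_perf, √(I·B_perf)) → (C_perf, √(J·C_perf)) is again an excision situation: the radical √(I·B_perf) is the kernel of B_perf → (B/I)_perf, and f_perf carries √(I·B_perf) isomorphically onto √(J·C_perf). -/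
open PerfectClosure Function

section Aux
variable (p : ℕ) [Fact p.Prime] {B : Type*} [CommRing B] [CharP B p]

private lemma aux_mk_pow_shift (m n : ℕ) (a : B) :
    mk B p (n + m, a ^ p ^ m) = mk B p (n, a) := by
  induction m with
  | zero => simp
  | succ m ih =>
    have h : a ^ p ^ (m + 1) = (a ^ p ^ m) ^ p := by rw [← pow_mul, pow_succ]
    rw [show n + (m + 1) = n + m + 1 from rfl, h, mk_succ_pow, ih]

private lemma aux_mk_pow (k n : ℕ) (a : B) :
    mk B p (n + k, a) ^ p ^ k = mk B p (n, a) := by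
  rw [mk_pow]
  exact aux_mk_pow_shift p k n a

private lemma aux_mk_pow0 (n : ℕ) (a : B) :
    mk B p (n, a) ^ p ^ n = PerfectClosure.of B p a := by
  have h := aux_mk_pow p n 0 a
  rwa [zero_add] at h

private lemma aux_mem_map (I : Ideal B) {z : PerfectClosure B p}
    (hz : z ∈ I.map (PerfectClosure.of B p)) :
    ∃ n a, a ∈ I ∧ z = mk B p (n, a) := by
  have hp : (0:ℕ) < p := (Fact.out : p.Prime).pos
  rw [Ideal.map] at hz
  induction hz using Submodule.span_induction with
  | mem x hx =>
    obtain ⟨a, ha, rfl⟩ := hx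
    exact ⟨0, a, ha, rfl⟩
  | zero => exact ⟨0, 0, I.zero_mem, (zero_def B p).symm⟩
  | add x y hx hy ihx ihy =>
    obtain ⟨n, a, ha, rfl⟩ := ihx
    obtain ⟨m, b, hb, rfl⟩ := ihy
    refine ⟨n + m, _, ?_, (mk_add_mk B p _ _)⟩
    simp only [iterate_frobenius]
    exact I.add_mem (I.pow_mem_of_mem ha _ (pow_pos hp m)) (I.pow_mem_of_mem hb _ (pow_pos hp n))
  | smul r x hx ihx =>
    obtain ⟨n, a, ha, rfl⟩ := ihx
    obtain ⟨⟨m, c⟩, rfl⟩ := mk_surjective (K := B) (p := p) r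
    refine ⟨m + n, _, ?_, by rw [smul_eq_mul, mk_mul_mk]⟩
    simp only [iterate_frobenius]
    exact I.mul_mem_left _ (I.pow_mem_of_mem ha _ (pow_pos hp m))

end Aux

/-- Let `f : (B, I) → (C, J)` be a map of pairs of
`𝔽_p`-algebras restricting to an isomorphism `I ≅ J` (an excision situation).
Then the induced map on colimit perfections
`(B_perf, √(I·B_perf)) → (C_perf, √(J·C_perf))` is again an excision
situation: `√(I·B_perf)` is the kernel of `B_perf → (B/I)_perf`, and the
induced map carries `√(I·B_perf)` bijectively onto `√(J·C_perf)`. -/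
theorem perfection_excision
    (p : ℕ) [Fact p.Prime]
    (B : Type*) [CommRing B] [CharP B p]
    (C : Type*) [CommRing C] [CharP C p]
    (I : Ideal B) (J : Ideal C) (f : B →+* C)
    [CharP (B ⧸ I) p] [CharP (C ⧸ J) p]
    (hIJ : Set.BijOn f (I : Set B) (J : Set C)) :
    letI φ : PerfectClosure B p →+* PerfectClosure C p :=
      PerfectClosure.lift B p (PerfectClosure C p)
        ((PerfectClosure.of C p).comp f)
    letI ψ : PerfectClosure B p →+* PerfectClosure (B ⧸ I) p :=
      PerfectClosure.lift B p (PerfectClosure (B ⧸ I) p)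
        ((PerfectClosure.of (B ⧸ I) p).comp (Ideal.Quotient.mk I))
    letI I' : Ideal (PerfectClosure B p) :=
      (I.map (PerfectClosure.of B p)).radical
    letI J' : Ideal (PerfectClosure C p) :=
      (J.map (PerfectClosure.of C p)).radical
    RingHom.ker ψ = I' ∧ Set.BijOn φ (I' : Set (PerfectClosure B p))
      (J' : Set (PerfectClosure C p)) := by
  set φ : PerfectClosure B p →+* PerfectClosure C p :=
    PerfectClosure.lift B p (PerfectClosure C p) ((PerfectClosure.of C p).comp f) with hφd
  set ψ : PerfectClosure B p →+* PerfectClosure (B ⧸ I) p :=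
    PerfectClosure.lift B p (PerfectClosure (B ⧸ I) p)
      ((PerfectClosure.of (B ⧸ I) p).comp (Ideal.Quotient.mk I)) with hψd
  set I' : Ideal (PerfectClosure B p) := (I.map (PerfectClosure.of B p)).radical with hI'd
  set J' : Ideal (PerfectClosure C p) := (J.map (PerfectClosure.of C p)).radical with hJ'd
  have hp : (0:ℕ) < p := (Fact.out : p.Prime).pos
  have hp1 : (1:ℕ) < p := (Fact.out : p.Prime).one_lt
  have hφmk : ∀ (n : ℕ) (a : B), φ (mk B p (n, a)) = mk C p (n, f a) := by
    intro n a
    apply (injective_frobenius (PerfectClosure C p) p).iterate n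
    rw [← RingHom.map_iterate_frobenius, iterate_frobenius_mk, iterate_frobenius_mk]
    rfl
  have hψmk : ∀ (n : ℕ) (b : B),
      ψ (mk B p (n, b)) = mk (B ⧸ I) p (n, Ideal.Quotient.mk I b) := by
    intro n b
    apply (injective_frobenius (PerfectClosure (B ⧸ I) p) p).iterate n
    rw [← RingHom.map_iterate_frobenius, iterate_frobenius_mk, iterate_frobenius_mk]
    rfl
  constructor
  · -- ker ψ = I'
    ext z
    obtain ⟨⟨n, b⟩, rfl⟩ := mk_surjective (K := B) (p := p) z
    constructor
    · intro hz
      rw [RingHom.mem_ker, hψmk] at hz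
      rw [show (0 : PerfectClosure (B ⧸ I) p) = mk _ p (0, 0) from zero_def _ p,
        mk_eq_iff] at hz
      obtain ⟨m, hm⟩ := hz
      simp only [iterate_frobenius, zero_add] at hm
      rw [zero_pow (pow_pos hp _).ne'] at hm
      have hbm : b ^ p ^ m ∈ I := by
        rw [← Ideal.Quotient.eq_zero_iff_mem, map_pow]
        exact hm
      refine ⟨p ^ n * p ^ m, ?_⟩
      rw [pow_mul, aux_mk_pow0 p n b, ← map_pow]
      exact Ideal.mem_map_of_mem _ hbm
    · intro hz
      obtain ⟨k, hk⟩ := hz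
      obtain ⟨N, a, ha, he⟩ := aux_mem_map p I hk
      rw [RingHom.mem_ker]
      have h1 : (ψ (mk B p (n, b))) ^ k = 0 := by
        rw [← map_pow, he, hψmk, Ideal.Quotient.eq_zero_iff_mem.mpr ha, mk_zero_right]
      exact IsNilpotent.eq_zero ⟨k, h1⟩
  · refine ⟨?_, ?_, ?_⟩
    · -- MapsTo
      intro z hz
      obtain ⟨k, hk⟩ := hz
      have hk1 : z ^ (k + 1) ∈ I.map (PerfectClosure.of B p) := by
        rw [pow_succ']
        exact Ideal.mul_mem_left _ _ hk
      obtain ⟨N, a, ha, he⟩ := aux_mem_map p I hk1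
      refine ⟨(k + 1) * p ^ N, ?_⟩
      rw [pow_mul, ← map_pow, he, hφmk, aux_mk_pow0 p N (f a)]
      exact Ideal.mem_map_of_mem _ (hIJ.mapsTo ha)
    · -- InjOn
      intro x hx y hy hxy
      have hd : x - y ∈ I' := I'.sub_mem hx hy
      obtain ⟨k, hk⟩ := hd
      have hk1 : (x - y) ^ (k + 1) ∈ I.map (PerfectClosure.of B p) := by
        rw [pow_succ']
        exact Ideal.mul_mem_left _ _ hk
      obtain ⟨N, a, ha, he⟩ := aux_mem_map p I hk1
      have h0 : mk C p (N, f a) = 0 := by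
        rw [← hφmk, ← he, map_pow, map_sub, hxy, sub_self, zero_pow (Nat.succ_ne_zero k)]
      rw [show (0 : PerfectClosure C p) = mk _ p (0, 0) from zero_def _ p, mk_eq_iff] at h0
      obtain ⟨m, hm⟩ := h0
      simp only [iterate_frobenius, zero_add] at hm
      rw [zero_pow (pow_pos hp _).ne'] at hm
      have hfam : f (a ^ p ^ m) = f 0 := by rw [map_pow, map_zero]; exact hm
      have ham : a ^ p ^ m = 0 :=
        hIJ.injOn (I.pow_mem_of_mem ha _ (pow_pos hp m)) I.zero_mem hfam
      have hnil : (x - y) ^ ((k + 1) * p ^ m) = 0 := by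
        rw [pow_mul, he, mk_pow]
        show mk B p (N, a ^ p ^ m) = 0
        rw [ham, mk_zero_right]
      have h0' : x - y = 0 := IsNilpotent.eq_zero ⟨(k + 1) * p ^ m, hnil⟩
      exact sub_eq_zero.mp h0'
    · -- SurjOn
      intro w hw
      obtain ⟨k, hk⟩ := hw
      have hk' : w ^ p ^ k ∈ J.map (PerfectClosure.of C p) := by
        have hle : k ≤ p ^ k := (Nat.lt_pow_self hp1 : k < p ^ k).le
        have hsplit : w ^ p ^ k = w ^ (p ^ k - k) * w ^ k := by
          rw [← pow_add, Nat.sub_add_cancel hle]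
        rw [hsplit]
        exact Ideal.mul_mem_left _ _ hk
      obtain ⟨N, c, hc, he⟩ := aux_mem_map p J hk'
      obtain ⟨a, ha, hfa⟩ := hIJ.surjOn hc
      refine ⟨mk B p (N + k, a), ?_, ?_⟩
      · refine ⟨p ^ k * p ^ N, ?_⟩
        rw [pow_mul, aux_mk_pow p k N a, aux_mk_pow0 p N a]
        exact Ideal.mem_map_of_mem _ ha
      · have hzk : (φ (mk B p (N + k, a))) ^ p ^ k = w ^ p ^ k := by
          rw [hφmk, aux_mk_pow p k N (f a), hfa]
          exact he.symm
        have hsub : (φ (mk B p (N + k, a)) - w) ^ p ^ k = 0 := by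
          rw [sub_pow_char_pow, hzk, sub_self]
        have h0 : φ (mk B p (N + k, a)) - w = 0 := IsNilpotent.eq_zero ⟨p ^ k, hsub⟩
        exact sub_eq_zero.mp h0
end
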